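/- arXiv:2108.01248 — 2 statements merged into one kernel-verified Lean document; each statement's English description precedes it below -/
import Mathlib

section
/- Let 0 < θ̲ < 1, γ > 0, θ ∈ [θ̲, θ̄] with 1/2 ∨ θ̲ < θ̄ < 1, Δ ∈ (0, (1-θ̄)/θ̄), and let (a_j)_{j≥0} be nonnegative reals. Then for every k ≥ 1: ∑_{j=0}^{k-1} (1+(j+1)Δ)^γ a_{⌊θj⌋} ≤ (⌊1/θ̲⌋+1) θ̲^{-γ} ∑_{j=0}^{k-1} (1+(j+1)Δ)^γ a_j. -/
/-!
Group the indices `j < k` by `i = ⌊θ j⌋`. Each fibre is a run of consecutive integers in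
`[i/θ, (i+1)/θ)`, so it has at most `⌊1/θ⌋ + 1 ≤ ⌊1/θ̲⌋ + 1` elements, and `⌊θ j⌋ ≤ j < k`.
On a fibre, `j < (i+1)/θ` and `θ(1+Δ) ≤ 1` give `1 + (j+1)Δ ≤ θ⁻¹ (1 + (i+1)Δ)`, so each
left-hand weight is at most `θ̲^{-γ}` times the weight of `a_i` on the right.
-/

open Finset

theorem sum_comp_le_mul_sum {ι κ R : Type*} [DecidableEq κ] [CommSemiring R] [PartialOrder R]
    [IsOrderedRing R] {s : Finset ι} {t : Finset κ} {f : ι → κ} {g : κ → R} {M : ℕ}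
    (hf : ∀ j ∈ s, f j ∈ t) (hfiber : ∀ i ∈ t, #{j ∈ s | f j = i} ≤ M)
    (hg : ∀ i ∈ t, 0 ≤ g i) :
    ∑ j ∈ s, g (f j) ≤ M * ∑ i ∈ t, g i := by
  rw [← sum_fiberwise_of_maps_to hf, mul_sum]
  refine sum_le_sum fun i hi => ?_
  calc ∑ j ∈ s with f j = i, g (f j)
      = #{j ∈ s | f j = i} * g i := by
        rw [sum_congr rfl fun j hj => congrArg g (mem_filter.mp hj).2, sum_const, nsmul_eq_mul]
    _ ≤ M * g i := mul_le_mul_of_nonneg_right (Nat.mono_cast (hfiber i hi)) (hg i hi)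

theorem card_filter_floor_mul_eq_le {θ : ℝ} (hθ : 0 < θ) (s : Finset ℕ) (i : ℕ) :
    #{j ∈ s | ⌊θ * ((j : ℕ) : ℝ)⌋₊ = i} ≤ ⌊1 / θ⌋₊ + 1 := by
  set n₀ := ⌈(i : ℝ) / θ⌉₊
  have hsub : {j ∈ s | ⌊θ * ((j : ℕ) : ℝ)⌋₊ = i} ⊆ Icc n₀ (n₀ + ⌊1 / θ⌋₊) := by
    intro j hj
    obtain ⟨-, rfl⟩ := mem_filter.mp hj
    have hlo : (⌊θ * (j : ℝ)⌋₊ : ℝ) ≤ θ * j := Nat.floor_le (by positivity)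
    have hhi : θ * j < ⌊θ * (j : ℝ)⌋₊ + 1 := Nat.lt_floor_add_one _
    have hn₀ : n₀ ≤ j := by
      rw [Nat.ceil_le, div_le_iff₀ hθ]; linarith
    have hn₀' : (⌊θ * (j : ℝ)⌋₊ : ℝ) / θ ≤ n₀ := Nat.le_ceil _
    refine mem_Icc.mpr ⟨hn₀, ?_⟩
    suffices j - n₀ ≤ ⌊1 / θ⌋₊ by omega
    refine Nat.le_floor ?_
    have hj : (j : ℝ) < (⌊θ * (j : ℝ)⌋₊ + 1) / θ := by rw [lt_div_iff₀ hθ]; linarith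
    rw [add_div] at hj
    rw [Nat.cast_sub hn₀]
    linarith
  calc #{j ∈ s | ⌊θ * ((j : ℕ) : ℝ)⌋₊ = i} ≤ #(Icc n₀ (n₀ + ⌊1 / θ⌋₊)) := card_le_card hsub
    _ = ⌊1 / θ⌋₊ + 1 := by rw [Nat.card_Icc]; omega

theorem one_add_mul_le_inv_mul_floor {θ Δ : ℝ} (hθ : 0 < θ) (hΔ : 0 ≤ Δ)
    (hθΔ : θ * (1 + Δ) ≤ 1) (j : ℕ) :
    1 + ((j : ℝ) + 1) * Δ ≤ θ⁻¹ * (1 + ((⌊θ * (j : ℝ)⌋₊ : ℝ) + 1) * Δ) := by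
  have hj : θ * j ≤ ⌊θ * (j : ℝ)⌋₊ + 1 := (Nat.lt_floor_add_one _).le
  rw [inv_mul_eq_div, le_div_iff₀ hθ]
  nlinarith [mul_le_mul_of_nonneg_right hj hΔ]

theorem rpow_le_rpow_neg_mul_floor {θ Δ γ : ℝ} (hθ : 0 < θ) (hΔ : 0 ≤ Δ)
    (hθΔ : θ * (1 + Δ) ≤ 1) (hγ : 0 ≤ γ) (j : ℕ) :
    (1 + ((j : ℝ) + 1) * Δ) ^ γ ≤ θ ^ (-γ) * (1 + ((⌊θ * (j : ℝ)⌋₊ : ℝ) + 1) * Δ) ^ γ := by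
  calc (1 + ((j : ℝ) + 1) * Δ) ^ γ
      ≤ (θ⁻¹ * (1 + ((⌊θ * (j : ℝ)⌋₊ : ℝ) + 1) * Δ)) ^ γ :=
        Real.rpow_le_rpow (by positivity) (one_add_mul_le_inv_mul_floor hθ hΔ hθΔ j) hγ
    _ = θ ^ (-γ) * (1 + ((⌊θ * (j : ℝ)⌋₊ : ℝ) + 1) * Δ) ^ γ := by
        rw [Real.mul_rpow (by positivity) (by positivity), Real.inv_rpow hθ.le,
          Real.rpow_neg hθ.le]

theorem sum_range_comp_floor_mul_le {θ : ℝ} (hθ : 0 < θ) (hθ1 : θ ≤ 1) {g : ℕ → ℝ}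
    (hg : ∀ i, 0 ≤ g i) (k : ℕ) :
    ∑ j ∈ range k, g ⌊θ * (j : ℝ)⌋₊ ≤ ((⌊1 / θ⌋₊ + 1 : ℕ) : ℝ) * ∑ i ∈ range k, g i := by
  refine sum_comp_le_mul_sum (fun j hj => ?_) (fun i _ => card_filter_floor_mul_eq_le hθ _ i)
    fun i _ => hg i
  exact mem_range.mpr ((Nat.floor_le_of_le (mul_le_of_le_one_left j.cast_nonneg hθ1)).trans_lt
    (mem_range.mp hj))

theorem stmt_10_general (tl tb θ γ Δ : ℝ) (a : ℕ → ℝ)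
    (htl0 : 0 < tl) (hγ : 0 < γ)
    (hθ : θ ∈ Set.Icc tl tb) (hΔ0 : 0 < Δ) (hΔ : Δ < (1 - tb) / tb)
    (ha : ∀ j, 0 ≤ a j) (k : ℕ) :
    ∑ j ∈ Finset.range k, (1 + ((j : ℝ) + 1) * Δ) ^ γ * a ⌊θ * (j : ℝ)⌋₊
      ≤ ((⌊1 / tl⌋ : ℝ) + 1) * tl ^ (-γ) *
          ∑ j ∈ Finset.range k, (1 + ((j : ℝ) + 1) * Δ) ^ γ * a j := by
  obtain ⟨hθl, hθb⟩ := hθ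
  have hθ0 : 0 < θ := htl0.trans_le hθl
  have hθΔ : θ * (1 + Δ) ≤ 1 := by
    rw [lt_div_iff₀ (hθ0.trans_le hθb)] at hΔ
    nlinarith
  set g : ℕ → ℝ := fun i => (1 + ((i : ℝ) + 1) * Δ) ^ γ * a i
  have hg : ∀ i, 0 ≤ g i := fun i => mul_nonneg (by positivity) (ha i)
  have hcast : (⌊1 / tl⌋ : ℝ) = (⌊1 / tl⌋₊ : ℕ) := by
    rw [← Int.natCast_floor_eq_floor (by positivity), Int.cast_natCast]
  calc ∑ j ∈ range k, (1 + ((j : ℝ) + 1) * Δ) ^ γ * a ⌊θ * (j : ℝ)⌋₊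
      ≤ ∑ j ∈ range k, θ ^ (-γ) * g ⌊θ * (j : ℝ)⌋₊ := by
        refine sum_le_sum fun j _ => ?_
        rw [← mul_assoc]
        exact mul_le_mul_of_nonneg_right
          (rpow_le_rpow_neg_mul_floor hθ0 hΔ0.le hθΔ hγ.le j) (ha _)
    _ ≤ tl ^ (-γ) * (((⌊1 / θ⌋₊ + 1 : ℕ) : ℝ) * ∑ i ∈ range k, g i) := by
        rw [← mul_sum]
        exact mul_le_mul (Real.rpow_le_rpow_of_nonpos htl0 hθl (by linarith))
          (sum_range_comp_floor_mul_le hθ0 (by nlinarith) hg k)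
          (sum_nonneg fun j _ => hg _) (by positivity)
    _ ≤ tl ^ (-γ) * (((⌊1 / tl⌋₊ + 1 : ℕ) : ℝ) * ∑ i ∈ range k, g i) := by
        gcongr
        exact sum_nonneg fun i _ => hg i
    _ = ((⌊1 / tl⌋ : ℝ) + 1) * tl ^ (-γ) * ∑ i ∈ range k, g i := by
        rw [hcast]; push_cast; ring

/-- Polynomial-weight grouping estimate: for `0 < θ̲ < 1`, `γ > 0`,
`θ ∈ [θ̲, θ̄]` with `1/2 ∨ θ̲ < θ̄ < 1`, `Δ ∈ (0, (1-θ̄)/θ̄)` and nonnegative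
reals `(a_j)`, for every `k ≥ 1`:
`∑_{j<k} (1+(j+1)Δ)^γ a_{⌊θj⌋} ≤ (⌊1/θ̲⌋+1) θ̲^{-γ} ∑_{j<k} (1+(j+1)Δ)^γ a_j`. -/
theorem stmt_10 (tl tb θ γ Δ : ℝ) (a : ℕ → ℝ)
    (htl0 : 0 < tl) (htl1 : tl < 1) (hγ : 0 < γ)
    (htb1 : max (1 / 2) tl < tb) (htb2 : tb < 1)
    (hθ : θ ∈ Set.Icc tl tb) (hΔ0 : 0 < Δ) (hΔ : Δ < (1 - tb) / tb)
    (ha : ∀ j, 0 ≤ a j) (k : ℕ) (hk : 1 ≤ k) :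
    ∑ j ∈ Finset.range k, (1 + ((j : ℝ) + 1) * Δ) ^ γ * a ⌊θ * (j : ℝ)⌋₊
      ≤ ((⌊1 / tl⌋ : ℝ) + 1) * tl ^ (-γ) *
          ∑ j ∈ Finset.range k, (1 + ((j : ℝ) + 1) * Δ) ^ γ * a j :=
  stmt_10_general tl tb θ γ Δ a htl0 hγ hθ hΔ0 hΔ ha k
end

section
/- (Discrete semimartingale convergence theorem) Let (ξ₁(i))_{i≥0} and (ξ₂(i))_{i≥0} be nondecreasing sequences of nonnegative random variables with ξ₁(i), ξ₂(i) measurable with respect to ℱ_{i-1} for i ≥ 1 and ξ₁(0) = ξ₂(0) = 0 a.s., let (M(i))_{i≥0} be a real-valued local martingale with M(0) = 0 a.s., and let ξ be a nonnegative ℱ₀-measurable random variable with E[ξ] < ∞. Set η(i) = ξ + ξ₁(i) - ξ₂(i) + M(i) and suppose η(i) ≥ 0 for all i. Then almost surely on the event {lim_{i→∞} ξ₁(i) < ∞}, both lim_{i→∞} ξ₂(i) < ∞ and lim_{i→∞} η(i) exists finitely. -/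
/-!
Fix a level `a ∈ ℕ` and stop at the predictable time `σ` just before `ξ₁` first exceeds `a`.
Up to `σ` one has `ξ₂ ≤ ξ + a + M`, so `N = ξ + a + M^σ` is a nonnegative local martingale
dominating the increasing process `ξ₂^σ`. In discrete time a nonnegative local martingale is a
true martingale (monotone convergence along the localizing sequence), hence `N` and the
nonnegative supermartingale `N - ξ₂^σ` converge a.s., and so does `ξ₂^σ`. On `{sup ξ₁ ≤ a}`
nothing is stopped, so `ξ₂`, `M` and therefore `η = ξ + ξ₁ - ξ₂ + M` converge there; finally take
the union over `a`.
-/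

open MeasureTheory Filter

/-- A discrete-time local martingale: there is a localizing sequence of stopping
times tending to infinity along which the stopped process is a martingale. -/
def IsDiscreteLocalMartingale {Ω : Type*} {m : MeasurableSpace Ω}
    (ℱ : Filtration ℕ m) (μ : Measure Ω) (M : ℕ → Ω → ℝ) : Prop :=
  ∃ τ : ℕ → Ω → ℕ,
    (∀ n, IsStoppingTime ℱ (fun ω => ((τ n ω : ℕ) : WithTop ℕ))) ∧
    (∀ ω, Monotone fun n => τ n ω) ∧
    (∀ ω, Tendsto (fun n => τ n ω) atTop atTop) ∧
    (∀ n, Martingale (MeasureTheory.stoppedProcess M (fun ω => ((τ n ω : ℕ) : WithTop ℕ))) ℱ μ)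

open scoped Topology

section Stopping

variable {Ω : Type*} {m : MeasurableSpace Ω}

theorem MeasureTheory.Martingale.stoppedProcess {ℱ : Filtration ℕ m} {μ : Measure Ω}
    [IsFiniteMeasure μ] {f : ℕ → Ω → ℝ} (hf : Martingale f ℱ μ) {σ : Ω → WithTop ℕ}
    (hσ : IsStoppingTime ℱ σ) : Martingale (stoppedProcess f σ) ℱ μ := by
  refine martingale_iff.2 ⟨?_, hf.submartingale.stoppedProcess hσ⟩
  simpa [MeasureTheory.stoppedProcess] using (hf.neg.submartingale.stoppedProcess hσ).neg

lemma exists_stoppedProcess_eq (σ : Ω → WithTop ℕ) (i : ℕ) (ω : Ω) :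
    ∃ k : ℕ, (k : WithTop ℕ) ≤ σ ω ∧ ∀ u : ℕ → Ω → ℝ, stoppedProcess u σ i ω = u k ω := by
  rcases le_total (i : WithTop ℕ) (σ ω) with h | h
  · exact ⟨i, h, fun u => stoppedProcess_eq_of_le (i := i) h⟩
  · obtain ⟨k, hk⟩ := WithTop.ne_top_iff_exists.1 (ne_top_of_le_ne_top WithTop.coe_ne_top h)
    exact ⟨k, hk.le, fun u => by rw [stoppedProcess_eq_of_ge (i := i) h, ← hk]; rfl⟩

lemma monotone_stoppedProcess {u : ℕ → Ω → ℝ} (hu : ∀ ω, Monotone (u · ω))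
    (σ : Ω → WithTop ℕ) (ω : Ω) : Monotone (stoppedProcess u σ · ω) := fun _ _ hij =>
  hu ω <| WithTop.untopA_mono (ne_top_of_le_ne_top WithTop.coe_ne_top (min_le_left _ _)) <|
    min_le_min_right _ (WithTop.coe_le_coe.2 hij)

lemma le_of_coe_le_hittingAfter {ξ₁ : ℕ → Ω → ℝ} {a : ℝ} {k : ℕ} {ω : Ω}
    (hk : (k : WithTop ℕ) ≤ hittingAfter (fun i => ξ₁ (i + 1)) (Set.Ioi a) 0 ω)
    (h0 : ξ₁ 0 ω ≤ a) : ξ₁ k ω ≤ a := by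
  cases k with
  | zero => exact h0
  | succ j =>
    exact le_of_not_gt <| notMem_of_lt_hittingAfter (u := fun i => ξ₁ (i + 1)) (s := Set.Ioi a)
      ((WithTop.coe_lt_coe.2 (Nat.lt_succ_self j)).trans_le hk) (Nat.zero_le j)

lemma hittingAfter_eq_top_of_forall_le {ξ₁ : ℕ → Ω → ℝ} {a : ℝ} {ω : Ω}
    (h : ∀ i, ξ₁ i ω ≤ a) : hittingAfter (fun i => ξ₁ (i + 1)) (Set.Ioi a) 0 ω = ⊤ :=
  hittingAfter_eq_top_iff.2 fun j _ => not_lt.2 (h (j + 1))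

end Stopping

namespace IsDiscreteLocalMartingale

variable {Ω : Type*} {m : MeasurableSpace Ω} {ℱ : Filtration ℕ m} {μ : Measure Ω}
  {X : ℕ → Ω → ℝ}

lemma stronglyAdapted (hX : IsDiscreteLocalMartingale ℱ μ X) : StronglyAdapted ℱ X := by
  obtain ⟨τ, -, -, hτ, hmart⟩ := hX
  refine fun i => @stronglyMeasurable_of_tendsto _ _ _ (ℱ i) _ _ atTop _ _ _ _
    (fun n => (hmart n).stronglyAdapted i) (tendsto_pi_nhds.2 fun ω => ?_)
  refine tendsto_const_nhds.congr' ?_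
  filter_upwards [(hτ ω).eventually_ge_atTop i] with n hn
  exact (stoppedProcess_eq_of_le (u := X) (i := i) (WithTop.coe_le_coe.2 hn)).symm

/-- On `s ∩ {i < τ n}` the process agrees at times `i` and `i + 1` with the martingale
stopped at `τ n`, and these sets increase to `s`. -/
lemma setLIntegral_succ_eq [IsFiniteMeasure μ] (hX : IsDiscreteLocalMartingale ℱ μ X)
    (hnn : ∀ i, 0 ≤ᵐ[μ] X i) {i : ℕ} {s : Set Ω} (hs : MeasurableSet[ℱ i] s) :
    ∫⁻ ω in s, ENNReal.ofReal (X (i + 1) ω) ∂μ = ∫⁻ ω in s, ENNReal.ofReal (X i ω) ∂μ := by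
  obtain ⟨τ, hτ, hmono, htend, hmart⟩ := hX
  set Y : ℕ → ℕ → Ω → ℝ := fun n => stoppedProcess X fun ω => (τ n ω : WithTop ℕ)
  set A : ℕ → Set Ω := fun n => s ∩ {ω | i < τ n ω}
  have hA : ∀ n, MeasurableSet[ℱ i] (A n) := fun n =>
    have hlt : {ω | i < τ n ω} = {ω | (τ n ω : WithTop ℕ) ≤ i}ᶜ := by ext; simp
    hs.inter (hlt ▸ (hτ n i).compl)
  have hAs : ⋃ n, A n = s := by
    refine subset_antisymm (Set.iUnion_subset fun n => Set.inter_subset_left) fun ω hω => ?_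
    obtain ⟨n, hn⟩ := ((htend ω).eventually_gt_atTop i).exists
    exact Set.mem_iUnion.2 ⟨n, hω, hn⟩
  have hAmono : Monotone A := fun n n' hnn' =>
    Set.inter_subset_inter_right _ fun ω (hω : i < τ n ω) => hω.trans_le (hmono ω hnn')
  have hstop : ∀ n, ∀ j ≤ i + 1, ∫⁻ ω in A n, ENNReal.ofReal (X j ω) ∂μ =
      ENNReal.ofReal (∫ ω in A n, Y n j ω ∂μ) := by
    intro n j hj
    have heq : ∀ ω ∈ A n, Y n j ω = X j ω :=
      fun ω hω => stoppedProcess_eq_of_le (u := X) (i := j) (WithTop.coe_le_coe.2 (hj.trans hω.2))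
    have hAn : MeasurableSet (A n) := ℱ.le i _ (hA n)
    have hpos : 0 ≤ᵐ[μ.restrict (A n)] Y n j := by
      filter_upwards [ae_restrict_mem hAn, ae_restrict_of_ae (hnn j)] with ω hω hω'
      rw [Pi.zero_apply, heq ω hω]
      exact hω'
    rw [ofReal_integral_eq_lintegral_ofReal ((hmart n).integrable j).integrableOn hpos]
    exact setLIntegral_congr_fun hAn fun ω hω => congrArg ENNReal.ofReal (heq ω hω).symm
  rw [← hAs, setLIntegral_iUnion_of_directed _ hAmono.directed_le,
    setLIntegral_iUnion_of_directed _ hAmono.directed_le]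
  refine iSup_congr fun n => ?_
  rw [hstop n _ le_rfl, hstop n _ (Nat.le_succ i), (hmart n).setIntegral_eq (Nat.le_succ i) (hA n)]

theorem martingale_of_nonneg [IsFiniteMeasure μ] (hX : IsDiscreteLocalMartingale ℱ μ X)
    (hnn : ∀ i, 0 ≤ᵐ[μ] X i) : Martingale X ℱ μ := by
  have hadp := hX.stronglyAdapted
  have hmeas : ∀ i, AEStronglyMeasurable (X i) μ := fun i =>
    ((hadp i).mono (ℱ.le i)).aestronglyMeasurable
  have hlint : ∀ i, ∫⁻ ω, ENNReal.ofReal (X i ω) ∂μ = ∫⁻ ω, ENNReal.ofReal (X 0 ω) ∂μ := by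
    intro i
    induction i with
    | zero => rfl
    | succ i ih => simpa [ih] using hX.setLIntegral_succ_eq hnn (i := i) MeasurableSet.univ
  have hint : ∀ i, Integrable (X i) μ := by
    obtain ⟨τ, -, -, -, hmart⟩ := hX
    have h0 : stoppedProcess X (fun ω => (τ 0 ω : WithTop ℕ)) 0 = X 0 :=
      funext fun ω => stoppedProcess_eq_of_le (u := X) (i := 0) (by simp)
    intro i
    rw [← lintegral_ofReal_ne_top_iff_integrable (hmeas i) (hnn i), hlint]
    exact (lintegral_ofReal_ne_top_iff_integrable (hmeas 0) (hnn 0)).2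
      (h0 ▸ (hmart 0).integrable 0)
  refine martingale_of_setIntegral_eq_succ hadp hint fun i s hs => ?_
  rw [integral_eq_lintegral_of_nonneg_ae (ae_restrict_of_ae (hnn i)) (hmeas i).restrict,
    integral_eq_lintegral_of_nonneg_ae (ae_restrict_of_ae (hnn (i + 1))) (hmeas (i + 1)).restrict,
    hX.setLIntegral_succ_eq hnn hs]

lemma stoppedProcess [IsFiniteMeasure μ] (hX : IsDiscreteLocalMartingale ℱ μ X)
    {σ : Ω → WithTop ℕ} (hσ : IsStoppingTime ℱ σ) :
    IsDiscreteLocalMartingale ℱ μ (stoppedProcess X σ) := by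
  obtain ⟨τ, hτ, hmono, htend, hmart⟩ := hX
  refine ⟨τ, hτ, hmono, htend, fun n => ?_⟩
  rw [stoppedProcess_stoppedProcess, inf_comm, ← stoppedProcess_stoppedProcess]
  exact Martingale.stoppedProcess (hmart n) hσ

lemma const_add [IsFiniteMeasure μ] (hX : IsDiscreteLocalMartingale ℱ μ X) {f : Ω → ℝ}
    (hf : StronglyMeasurable[ℱ 0] f) (hfint : Integrable f μ) :
    IsDiscreteLocalMartingale ℱ μ (fun i ω => f ω + X i ω) := by
  obtain ⟨τ, hτ, hmono, htend, hmart⟩ := hX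
  exact ⟨τ, hτ, hmono, htend, fun n => (martingale_const_fun ℱ μ hf hfint).add (hmart n)⟩

end IsDiscreteLocalMartingale

section Convergence

variable {Ω : Type*} {m : MeasurableSpace Ω} {ℱ : Filtration ℕ m} {μ : Measure Ω}

lemma monotone_update_zero {u : ℕ → Ω → ℝ} (hnn : ∀ i ω, 0 ≤ u i ω)
    (hmono : ∀ ω, Monotone (u · ω)) (ω : Ω) : Monotone (Function.update u 0 0 · ω) :=
  monotone_nat_of_le_succ fun i => by
    rcases eq_or_ne i 0 with rfl | hi
    · simpa using hnn 1 ω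
    · simpa [hi] using hmono ω (Nat.le_succ i)

lemma stronglyAdapted_update_zero {u : ℕ → Ω → ℝ}
    (hu : ∀ i : ℕ, 1 ≤ i → Measurable[ℱ (i - 1)] (u i)) :
    StronglyAdapted ℱ (Function.update u 0 0) := fun i => by
  rcases eq_or_ne i 0 with rfl | hi
  · simpa using stronglyMeasurable_zero
  · simpa [hi] using
      ((hu i (Nat.one_le_iff_ne_zero.2 hi)).mono (ℱ.mono (Nat.sub_le i 1)) le_rfl).stronglyMeasurable

theorem submartingale_of_monotone [IsFiniteMeasure μ] {A : ℕ → Ω → ℝ}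
    (hadp : StronglyAdapted ℱ A) (hint : ∀ i, Integrable (A i) μ)
    (hmono : ∀ ω, Monotone (A · ω)) : Submartingale A ℱ μ :=
  submartingale_of_setIntegral_le_succ hadp hint fun i _ _ =>
    setIntegral_mono (hint i).integrableOn (hint (i + 1)).integrableOn
      fun ω => hmono ω (Nat.le_succ i)

theorem MeasureTheory.Supermartingale.exists_ae_tendsto_of_nonneg [IsFiniteMeasure μ]
    {X : ℕ → Ω → ℝ} (hX : Supermartingale X ℱ μ) (hnn : ∀ i, 0 ≤ᵐ[μ] X i) :
    ∀ᵐ ω ∂μ, ∃ l, Tendsto (X · ω) atTop (𝓝 l) := by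
  have hbdd : ∀ i, eLpNorm ((-X) i) 1 μ ≤ (∫ ω, X 0 ω ∂μ).toNNReal := by
    intro i
    rw [Pi.neg_apply, eLpNorm_neg, eLpNorm_one_eq_lintegral_enorm,
      lintegral_congr_ae ((hnn i).mono fun ω h => Real.enorm_eq_ofReal h),
      ← ofReal_integral_eq_lintegral_ofReal (hX.integrable i) (hnn i)]
    exact ENNReal.ofReal_le_ofReal
      (by simpa using hX.setIntegral_le (Nat.zero_le i) MeasurableSet.univ)
  filter_upwards [hX.neg.exists_ae_tendsto_of_bdd hbdd] with ω ⟨l, hl⟩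
  exact ⟨-l, by simpa using hl.neg⟩

/-- `N` is a martingale and `N - A` a supermartingale, both nonnegative. -/
theorem IsDiscreteLocalMartingale.ae_tendsto_of_monotone_le [IsFiniteMeasure μ]
    {N A : ℕ → Ω → ℝ} (hN : IsDiscreteLocalMartingale ℱ μ N) (hA : StronglyAdapted ℱ A)
    (hAmono : ∀ ω, Monotone (A · ω)) (hAN : ∀ᵐ ω ∂μ, ∀ i, 0 ≤ A i ω ∧ A i ω ≤ N i ω) :
    ∀ᵐ ω ∂μ, (∃ l, Tendsto (N · ω) atTop (𝓝 l)) ∧ ∃ l, Tendsto (A · ω) atTop (𝓝 l) := by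
  have hNnn : ∀ i, 0 ≤ᵐ[μ] N i := fun i => hAN.mono fun ω h => (h i).1.trans (h i).2
  have hNmart : Martingale N ℱ μ := hN.martingale_of_nonneg hNnn
  have hAint : ∀ i, Integrable (A i) μ := fun i =>
    (hNmart.integrable i).mono' ((hA i).mono (ℱ.le i)).aestronglyMeasurable
      (hAN.mono fun ω h => by rw [Real.norm_of_nonneg (h i).1]; exact (h i).2)
  have hZ : Supermartingale (N - A) ℱ μ :=
    hNmart.supermartingale.sub_submartingale (submartingale_of_monotone hA hAint hAmono)
  filter_upwards [hNmart.supermartingale.exists_ae_tendsto_of_nonneg hNnn,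
    hZ.exists_ae_tendsto_of_nonneg fun i => hAN.mono fun ω h => sub_nonneg.2 (h i).2]
    with ω ⟨lN, hlN⟩ ⟨lZ, hlZ⟩
  exact ⟨⟨lN, hlN⟩, lN - lZ, by simpa using hlN.sub hlZ⟩

theorem semimartingale_ae_tendsto_of_forall_le [IsFiniteMeasure μ] {ξ : Ω → ℝ}
    {ξ₁ ξ₂ M : ℕ → Ω → ℝ} (a : ℝ) (hξ₂nonneg : ∀ i ω, 0 ≤ ξ₂ i ω)
    (hξ₂mono : ∀ ω, Monotone (ξ₂ · ω)) (hξ₁meas : Adapted ℱ fun i => ξ₁ (i + 1))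
    (hξ₂meas : StronglyAdapted ℱ ξ₂) (hξ₁0 : ∀ᵐ ω ∂μ, ξ₁ 0 ω ≤ a)
    (hξmeas : StronglyMeasurable[ℱ 0] ξ) (hξint : Integrable ξ μ)
    (hM : IsDiscreteLocalMartingale ℱ μ M) (hη : ∀ i ω, 0 ≤ ξ ω + ξ₁ i ω - ξ₂ i ω + M i ω) :
    ∀ᵐ ω ∂μ, (∀ i, ξ₁ i ω ≤ a) →
      (∃ l, Tendsto (ξ₂ · ω) atTop (𝓝 l)) ∧ ∃ l, Tendsto (M · ω) atTop (𝓝 l) := by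
  set σ := hittingAfter (fun i => ξ₁ (i + 1)) (Set.Ioi a) 0
  have hσ : IsStoppingTime ℱ σ := hξ₁meas.isStoppingTime_hittingAfter measurableSet_Ioi
  have hN : IsDiscreteLocalMartingale ℱ μ fun i ω => (ξ ω + a) + stoppedProcess M σ i ω :=
    (hM.stoppedProcess hσ).const_add (hξmeas.add stronglyMeasurable_const)
      (hξint.add (integrable_const a))
  have hAN : ∀ᵐ ω ∂μ, ∀ i, 0 ≤ stoppedProcess ξ₂ σ i ω ∧
      stoppedProcess ξ₂ σ i ω ≤ (ξ ω + a) + stoppedProcess M σ i ω := by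
    filter_upwards [hξ₁0] with ω h0 i
    obtain ⟨k, hkσ, hk⟩ := exists_stoppedProcess_eq σ i ω
    rw [hk, hk]
    exact ⟨hξ₂nonneg k ω, by linarith [hη k ω, le_of_coe_le_hittingAfter hkσ h0]⟩
  filter_upwards [hN.ae_tendsto_of_monotone_le (hξ₂meas.stoppedProcess_of_discrete hσ)
    (monotone_stoppedProcess hξ₂mono σ) hAN] with ω ⟨⟨lN, hlN⟩, ⟨lA, hlA⟩⟩ hle
  have hσω : σ ω = ⊤ := hittingAfter_eq_top_of_forall_le hle
  have hunstopped : ∀ u : ℕ → Ω → ℝ, (stoppedProcess u σ · ω) = (u · ω) := fun u =>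
    funext fun i => stoppedProcess_eq_of_le (i := i) (hσω ▸ le_top)
  rw [hunstopped] at hlA
  refine ⟨⟨lA, hlA⟩, lN - (ξ ω + a), ?_⟩
  simpa only [hunstopped, add_sub_cancel_left] using
    hlN.sub (tendsto_const_nhds (x := ξ ω + a))

end Convergence

theorem stmt_12_general {Ω : Type*} {m : MeasurableSpace Ω} {μ : Measure Ω}
    [IsProbabilityMeasure μ] (ℱ : Filtration ℕ m)
    (ξ : Ω → ℝ) (ξ₁ ξ₂ M η : ℕ → Ω → ℝ)
    (hξ₂nonneg : ∀ i ω, 0 ≤ ξ₂ i ω)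
    (hξ₁mono : ∀ ω, Monotone fun i => ξ₁ i ω)
    (hξ₂mono : ∀ ω, Monotone fun i => ξ₂ i ω)
    (hξ₁meas : ∀ i : ℕ, 1 ≤ i → Measurable[ℱ (i - 1)] (ξ₁ i))
    (hξ₂meas : ∀ i : ℕ, 1 ≤ i → Measurable[ℱ (i - 1)] (ξ₂ i))
    (hξ₁0 : ∀ᵐ ω ∂μ, ξ₁ 0 ω = 0)
    (hξmeas : Measurable[ℱ 0] ξ)
    (hξint : Integrable ξ μ)
    (hM : IsDiscreteLocalMartingale ℱ μ M)
    (hη : ∀ i ω, η i ω = ξ ω + ξ₁ i ω - ξ₂ i ω + M i ω)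
    (hηnonneg : ∀ i ω, 0 ≤ η i ω) :
    ∀ᵐ ω ∂μ, BddAbove (Set.range fun i => ξ₁ i ω) →
      BddAbove (Set.range fun i => ξ₂ i ω) ∧
      ∃ l : ℝ, Tendsto (fun i => η i ω) atTop (nhds l) := by
  -- `ξ₂ 0` need not be measurable, so we work with `ξ₂` set to `0` at time `0`.
  set G := Function.update ξ₂ 0 0
  have hGle : ∀ i ω, G i ω ≤ ξ₂ i ω := fun i ω => by
    rcases eq_or_ne i 0 with rfl | hi
    · simpa [G] using hξ₂nonneg 0 ω
    · simp [G, hi]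
  have hGmono := monotone_update_zero hξ₂nonneg hξ₂mono
  have hlevel : ∀ n : ℕ, ∀ᵐ ω ∂μ, (∀ i, ξ₁ i ω ≤ n) →
      (∃ l, Tendsto (G · ω) atTop (𝓝 l)) ∧ ∃ l, Tendsto (M · ω) atTop (𝓝 l) := fun n =>
    semimartingale_ae_tendsto_of_forall_le n
      (fun i ω => (hGmono ω (Nat.zero_le i)).trans' (by simp)) hGmono
      (fun i => by simpa using hξ₁meas (i + 1) (Nat.le_add_left 1 i))
      (stronglyAdapted_update_zero hξ₂meas)
      (hξ₁0.mono fun ω h => h ▸ n.cast_nonneg) hξmeas.stronglyMeasurable hξint hM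
      fun i ω => by linarith [hGle i ω, hηnonneg i ω, hη i ω]
  filter_upwards [ae_all_iff.2 hlevel] with ω hω ⟨b, hb⟩
  obtain ⟨⟨l₂, hl₂⟩, ⟨l, hl⟩⟩ := hω ⌈b⌉₊ fun i => (hb ⟨i, rfl⟩).trans (Nat.le_ceil b)
  have hξ₁ := tendsto_atTop_ciSup (hξ₁mono ω) ⟨b, hb⟩
  have hξ₂ : Tendsto (ξ₂ · ω) atTop (𝓝 l₂) :=
    hl₂.congr' <| (eventually_ne_atTop 0).mono fun i hi => by simp [G, hi]
  refine ⟨hξ₂.bddAbove_range, ξ ω + (⨆ i, ξ₁ i ω) - l₂ + l, ?_⟩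
  simpa only [hη] using (((tendsto_const_nhds (x := ξ ω)).add hξ₁).sub hξ₂).add hl

/-- Discrete semimartingale convergence theorem: if `η(i) = ξ + ξ₁(i) - ξ₂(i) + M(i) ≥ 0`
with `ξ₁, ξ₂` nondecreasing nonnegative predictable sequences vanishing at `0`,
`ξ ≥ 0` integrable and `ℱ₀`-measurable, and `M` a local martingale with `M(0) = 0`,
then a.s. on `{lim ξ₁ < ∞}` one has `lim ξ₂ < ∞` and `η` converges to a finite limit. -/
theorem stmt_12 {Ω : Type*} {m : MeasurableSpace Ω} {μ : Measure Ω}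
    [IsProbabilityMeasure μ] (ℱ : Filtration ℕ m)
    (ξ : Ω → ℝ) (ξ₁ ξ₂ M η : ℕ → Ω → ℝ)
    (hξ₁nonneg : ∀ i ω, 0 ≤ ξ₁ i ω) (hξ₂nonneg : ∀ i ω, 0 ≤ ξ₂ i ω)
    (hξ₁mono : ∀ ω, Monotone fun i => ξ₁ i ω)
    (hξ₂mono : ∀ ω, Monotone fun i => ξ₂ i ω)
    (hξ₁meas : ∀ i : ℕ, 1 ≤ i → Measurable[ℱ (i - 1)] (ξ₁ i))
    (hξ₂meas : ∀ i : ℕ, 1 ≤ i → Measurable[ℱ (i - 1)] (ξ₂ i))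
    (hξ₁0 : ∀ᵐ ω ∂μ, ξ₁ 0 ω = 0) (hξ₂0 : ∀ᵐ ω ∂μ, ξ₂ 0 ω = 0)
    (hξnonneg : ∀ ω, 0 ≤ ξ ω) (hξmeas : Measurable[ℱ 0] ξ)
    (hξint : Integrable ξ μ)
    (hM : IsDiscreteLocalMartingale ℱ μ M) (hM0 : ∀ᵐ ω ∂μ, M 0 ω = 0)
    (hη : ∀ i ω, η i ω = ξ ω + ξ₁ i ω - ξ₂ i ω + M i ω)
    (hηnonneg : ∀ i ω, 0 ≤ η i ω) :
    ∀ᵐ ω ∂μ, BddAbove (Set.range fun i => ξ₁ i ω) →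
      BddAbove (Set.range fun i => ξ₂ i ω) ∧
      ∃ l : ℝ, Tendsto (fun i => η i ω) atTop (nhds l) :=
  stmt_12_general ℱ ξ ξ₁ ξ₂ M η hξ₂nonneg hξ₁mono hξ₂mono hξ₁meas hξ₂meas hξ₁0 hξmeas hξint hM hη
    hηnonneg
end
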